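/- arXiv:1010.0512 — 5 statements merged into one kernel-verified Lean document; each statement's English description precedes it below -/
import Mathlib

section
/- The three-dimensional analogue of the bond-density lemma fails: for the tetrahedron T with vertices (1,0,0), (0,1,0), (0,0,1), (0,1,1) and bond direction r = (1,0,0), the sum over i ∈ ℤ³ of the bond averages ⨍_{(i,i+r)} χ_T db equals 0, whereas the volume of T is 1/6. -/
open MeasureTheory Filter

/-- Embedding of the lattice `ℤ³` into `ℝ³`. -/
noncomputable def c3 (i : ℤ × ℤ × ℤ) : ℝ × ℝ × ℝ := ((i.1 : ℝ), (i.2.1 : ℝ), (i.2.2 : ℝ))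

/-!
The tetrahedron is closed, so the density `χ` vanishes off it. Each bond `(i, i + e₁)` runs
parallel to the first axis at integer heights `(m, n)`, and such a line meets the tetrahedron in
at most one point; hence every bond average is the integral of an a.e. vanishing function. The
volume is computed by slicing: the slice at `x ∈ [0, 1]` is a right isosceles triangle with legs
`1 - x`.
-/

open Set Topology

lemma eq_zero_of_tendsto_density_of_notMem_closure {X : Type*} [PseudoMetricSpace X]
    [MeasurableSpace X] {μ : Measure X} {T : Set X} {x : X} {c : ℝ}
    (h : Tendsto (fun ρ : ℝ => (μ (T ∩ Metric.ball x ρ)).toReal / (μ (Metric.ball x ρ)).toReal)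
      (𝓝[>] 0) (𝓝 c))
    (hx : x ∉ closure T) : c = 0 := by
  rw [Metric.mem_closure_iff] at hx
  push Not at hx
  obtain ⟨ε, hε, hfar⟩ := hx
  refine tendsto_nhds_unique h (tendsto_const_nhds.congr' ?_)
  filter_upwards [Ioo_mem_nhdsGT hε] with ρ hρ
  have hempty : T ∩ Metric.ball x ρ = ∅ := by
    refine Set.eq_empty_of_forall_notMem fun y ⟨hyT, hyρ⟩ => ?_
    linarith [hfar y hyT, Metric.mem_ball'.1 hyρ, hρ.2]
  rw [hempty, measure_empty, ENNReal.toReal_zero, zero_div]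

lemma one_sub_smul_c3_add_smul_c3_add (i r : ℤ × ℤ × ℤ) (l : ℝ) :
    (1 - l) • c3 i + l • c3 (i + r) = c3 i + l • c3 r := by
  simp only [c3, Prod.fst_add, Prod.snd_add, Int.cast_add, Prod.smul_mk, Prod.mk_add_mk,
    smul_eq_mul, Prod.mk.injEq]
  refine ⟨?_, ?_, ?_⟩ <;> ring

lemma MeasureTheory.Measure.prod_apply_setOf_mem_slices {α β : Type*} [MeasurableSpace α]
    [MeasurableSpace β] {μ : Measure α} {ν : Measure β} [SFinite ν] {s : Set α} {R : α → Set β}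
    (hs : MeasurableSet s) (hR : MeasurableSet {p : α × β | p.1 ∈ s ∧ p.2 ∈ R p.1}) :
    μ.prod ν {p : α × β | p.1 ∈ s ∧ p.2 ∈ R p.1} = ∫⁻ x in s, ν (R x) ∂μ := by
  rw [Measure.prod_apply hR, ← lintegral_indicator hs]
  congr 1 with x
  by_cases hx : x ∈ s <;> simp [hx, Set.preimage]

lemma setLIntegral_Icc_ofReal_eq_intervalIntegral {f : ℝ → ℝ} {a b : ℝ} (hab : a ≤ b)
    (hf : ContinuousOn f (Icc a b)) (hf0 : ∀ x ∈ Icc a b, 0 ≤ f x) :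
    ∫⁻ x in Icc a b, ENNReal.ofReal (f x) = ENNReal.ofReal (∫ x in a..b, f x) := by
  rw [intervalIntegral.integral_of_le hab, ← integral_Icc_eq_integral_Ioc,
    ofReal_integral_eq_lintegral_ofReal hf.integrableOn_Icc
      ((ae_restrict_iff' measurableSet_Icc).2 (Eventually.of_forall hf0))]

def triangle (s : ℝ) : Set (ℝ × ℝ) := {q | q.1 ∈ Icc 0 s ∧ q.2 ∈ Icc (s - q.1) s}

def tetrahedron : Set (ℝ × ℝ × ℝ) := {p | p.1 ∈ Icc 0 1 ∧ p.2 ∈ triangle (1 - p.1)}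

lemma isClosed_triangle (s : ℝ) : IsClosed (triangle s) := by
  simp only [triangle, mem_Icc, ofPred_and]
  repeat' apply IsClosed.inter
  all_goals exact isClosed_le (by fun_prop) (by fun_prop)

lemma isClosed_tetrahedron : IsClosed tetrahedron := by
  simp only [tetrahedron, triangle, mem_Icc, ofPred_and]
  repeat' apply IsClosed.inter
  all_goals exact isClosed_le (by fun_prop) (by fun_prop)

lemma volume_triangle {s : ℝ} (hs : 0 ≤ s) : volume (triangle s) = ENNReal.ofReal (s ^ 2 / 2) := by
  rw [Measure.volume_eq_prod, triangle,
    Measure.prod_apply_setOf_mem_slices (R := fun y => Icc (s - y) s) measurableSet_Icc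
      (isClosed_triangle s).measurableSet]
  calc ∫⁻ y in Icc 0 s, volume (Icc (s - y) s)
      = ∫⁻ y in Icc 0 s, ENNReal.ofReal y := by simp [Real.volume_Icc]
    _ = ENNReal.ofReal (s ^ 2 / 2) := by
      rw [setLIntegral_Icc_ofReal_eq_intervalIntegral (f := fun y => y) hs continuousOn_id
        fun y hy => hy.1, integral_id]
      ring_nf

lemma volume_tetrahedron : volume tetrahedron = ENNReal.ofReal (1 / 6) := by
  rw [Measure.volume_eq_prod, tetrahedron,
    Measure.prod_apply_setOf_mem_slices (R := fun x => triangle (1 - x)) measurableSet_Icc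
      isClosed_tetrahedron.measurableSet]
  calc ∫⁻ x in Icc 0 1, volume (triangle (1 - x))
      = ∫⁻ x in Icc 0 1, ENNReal.ofReal ((1 - x) ^ 2 / 2) :=
        setLIntegral_congr_fun measurableSet_Icc fun x hx => volume_triangle (by linarith [hx.2])
    _ = ENNReal.ofReal (1 / 6) := by
      rw [setLIntegral_Icc_ofReal_eq_intervalIntegral zero_le_one (by fun_prop)
        fun x _ => by positivity]
      norm_num [intervalIntegral.integral_comp_sub_left (fun u : ℝ => u ^ 2 / 2)]

lemma convex_tetrahedron : Convex ℝ tetrahedron := by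
  rintro p ⟨⟨hp₁, hp₂⟩, ⟨hp₃, hp₄⟩, hp₅, hp₆⟩ q ⟨⟨hq₁, hq₂⟩, ⟨hq₃, hq₄⟩, hq₅, hq₆⟩ a b ha hb hab
  obtain rfl : b = 1 - a := by linarith
  simp only [tetrahedron, triangle, mem_Icc, mem_ofPred_eq, Prod.fst_add, Prod.snd_add,
    Prod.smul_fst, Prod.smul_snd, smul_eq_mul]
  refine ⟨⟨?_, ?_⟩, ⟨?_, ?_⟩, ?_, ?_⟩ <;> nlinarith

lemma convexHull_eq_tetrahedron :
    convexHull ℝ ({((1:ℝ), (0:ℝ), (0:ℝ)), ((0:ℝ), (1:ℝ), (0:ℝ)), ((0:ℝ), (0:ℝ), (1:ℝ)),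
      ((0:ℝ), (1:ℝ), (1:ℝ))} : Set (ℝ × ℝ × ℝ)) = tetrahedron := by
  refine (convexHull_min ?_ convex_tetrahedron).antisymm ?_
  · rintro p (rfl | rfl | rfl | rfl) <;> norm_num [tetrahedron, triangle]
  · rintro ⟨x, y, z⟩ ⟨⟨hx₀, -⟩, ⟨hy₀, hy₁⟩, hz₀, hz₁⟩
    simp only at hx₀ hy₀ hy₁ hz₀ hz₁
    -- barycentric coordinates of `(x, y, z)` with respect to the four vertices
    have hxyz : (x, y, z) = ∑ j : Fin 4,
        (![x, 1 - x - z, 1 - x - y, x + y + z - 1] j) •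
        (![((1:ℝ), (0:ℝ), (0:ℝ)), ((0:ℝ), (1:ℝ), (0:ℝ)), ((0:ℝ), (0:ℝ), (1:ℝ)),
          ((0:ℝ), (1:ℝ), (1:ℝ))] j) := by
      simp only [Fin.sum_univ_four, Matrix.cons_val, Prod.smul_mk, smul_eq_mul, Prod.mk_add_mk,
        Prod.mk.injEq]
      refine ⟨?_, ?_, ?_⟩ <;> ring
    rw [hxyz]
    refine (convex_convexHull ℝ _).sum_mem (fun j _ => ?_) ?_ fun j _ => ?_
    · fin_cases j <;> simp <;> linarith
    · simp only [Fin.sum_univ_four, Matrix.cons_val]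
      ring
    · fin_cases j <;> exact subset_convexHull ℝ _ (by simp)

lemma subsingleton_setOf_c3_add_smul_mem_tetrahedron (i : ℤ × ℤ × ℤ) :
    {l : ℝ | c3 i + l • c3 (1, 0, 0) ∈ tetrahedron}.Subsingleton := by
  obtain ⟨k, m, n⟩ := i
  rintro l ⟨⟨hl₀, -⟩, ⟨hm₀, hm₁⟩, hn₀, hn₁⟩ l' ⟨⟨hl₀', -⟩, ⟨-, hm₁'⟩, hn₀', hn₁'⟩
  simp only [c3, Prod.smul_mk, smul_eq_mul, Prod.mk_add_mk, Int.cast_one, Int.cast_zero, mul_one,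
    mul_zero, add_zero] at *
  -- `m` is an integer in `[0, 1]`: `m = 1` forces `k + l = 0`, and `m = 0` forces `k + l = 1 - n`
  have hm : m = 0 ∨ m = 1 := by
    have h₀ : 0 ≤ m := by exact_mod_cast hm₀
    have h₁ : m ≤ 1 := by exact_mod_cast (by linarith : (m:ℝ) ≤ 1)
    omega
  rcases hm with rfl | rfl <;> push_cast at * <;> linarith

/-- Failure of the bond-density lemma in three dimensions: for the tetrahedron `T` with
vertices `(1,0,0)`, `(0,1,0)`, `(0,0,1)`, `(0,1,1)`, bond direction `r = (1,0,0)`, and the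
density function `χ x = lim_{ρ→0} |T ∩ B_ρ(x)|/|B_ρ(x)|` (assumed to exist for every `x`),
the sum over `i ∈ ℤ³` of the bond averages `⨍_{(i,i+r)} χ db` equals `0`, whereas the
volume of `T` equals `1/6`. -/
theorem bond_density_3d_fails
    (T : Set (ℝ × ℝ × ℝ))
    (hT : T = convexHull ℝ
      {((1:ℝ), (0:ℝ), (0:ℝ)), ((0:ℝ), (1:ℝ), (0:ℝ)), ((0:ℝ), (0:ℝ), (1:ℝ)),
        ((0:ℝ), (1:ℝ), (1:ℝ))})
    (χ : ℝ × ℝ × ℝ → ℝ)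
    (hχ : ∀ x : ℝ × ℝ × ℝ,
      Tendsto (fun ρ : ℝ =>
          (volume (T ∩ Metric.ball x ρ)).toReal / (volume (Metric.ball x ρ)).toReal)
        (nhdsWithin 0 (Set.Ioi (0:ℝ))) (nhds (χ x))) :
    (∑' i : ℤ × ℤ × ℤ,
        ∫ l in (0:ℝ)..1, χ ((1 - l) • c3 i + l • c3 (i + ((1:ℤ), (0:ℤ), (0:ℤ))))) = 0
      ∧ (volume T).toReal = 1 / 6 := by
  rw [convexHull_eq_tetrahedron] at hT
  subst hT
  refine ⟨?_, by rw [volume_tetrahedron, ENNReal.toReal_ofReal (by norm_num)]⟩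
  refine (tsum_congr fun i => ?_).trans tsum_zero
  simp_rw [one_sub_smul_c3_add_smul_c3_add]
  refine intervalIntegral.integral_zero_ae ?_
  have hnull := (subsingleton_setOf_c3_add_smul_mem_tetrahedron i).measure_zero volume
  filter_upwards [measure_eq_zero_iff_ae_notMem.1 hnull] with l hl _
  exact eq_zero_of_tendsto_density_of_notMem_closure (hχ _)
    (by rwa [isClosed_tetrahedron.closure_eq])
end

section
/- For any triangle T in ℝ² with lattice vertices and any integer m ≥ 1, the scaled triangle mT can be partitioned (up to null sets) into m² triangles, each of which is obtained from T by a translation by a vector in ℤ² and possibly a point reflection about a point of ℤ². -/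
/-!
An affine equivalence `φ` of `ℝ²` sending `0, e₁, e₂` to the vertices `P, Q, S` maps `ℤ²` into
`ℤ²`, so it turns integer translations into integer translations and point reflections
`x ↦ c - x` (`c ∈ ℤ²`) into maps of the same kind. It therefore suffices to dissect `m • Δ`,
`Δ` the standard triangle: the lines `x = k`, `y = k`, `x + y = k` (`k ∈ ℤ`) cut it into
`m(m+1)/2` integer translates of `Δ` and `m(m-1)/2` reflected ones. A point in the interior of
a piece determines the piece through `(⌊x⌋, ⌊y⌋, ⌊x + y⌋)`, so interiors are disjoint.
-/

open MeasureTheory Set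
open scoped symmDiff Pointwise

/-- Embedding of the lattice `ℤ²` into `ℝ²`. -/
noncomputable def c2 (i : ℤ × ℤ) : ℝ × ℝ := ((i.1 : ℝ), (i.2 : ℝ))

theorem c2_add (a b : ℤ × ℤ) : c2 (a + b) = c2 a + c2 b := by simp [c2]

theorem c2_sub (a b : ℤ × ℤ) : c2 (a - b) = c2 a - c2 b := by simp [c2]

namespace AffineMap

variable {k V₁ V₂ : Type*} [Ring k] [AddCommGroup V₁] [Module k V₁] [AddCommGroup V₂]
  [Module k V₂]

theorem map_add_eq (f : V₁ →ᵃ[k] V₂) (x y : V₁) : f (x + y) = f x + (f y - f 0) := by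
  rw [f.decomp]
  simp only [Pi.add_apply, map_add, map_zero, zero_add, add_sub_cancel_right]
  abel

theorem map_sub_eq (f : V₁ →ᵃ[k] V₂) (x y : V₁) : f (x - y) = f x + f 0 - f y := by
  rw [f.decomp]
  simp only [Pi.add_apply, map_sub, map_zero, zero_add]
  abel

theorem map_smul_eq (f : V₁ →ᵃ[k] V₂) (r : k) (x : V₁) : f (r • x) = f 0 + r • (f x - f 0) := by
  rw [f.decomp]
  simp only [Pi.add_apply, map_smul, map_zero, zero_add, add_sub_cancel_right]
  abel

theorem map_prod_mk (f : k × k →ᵃ[k] V₂) (a b : k) :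
    f (a, b) = f 0 + a • (f (1, 0) - f 0) + b • (f (0, 1) - f 0) := by
  have hab : (a, b) = a • ((1 : k), (0 : k)) + b • ((0 : k), (1 : k)) := by simp
  rw [f.decomp]
  simp only [Pi.add_apply, map_zero, zero_add, add_sub_cancel_right]
  rw [hab, map_add, map_smul, map_smul]
  abel

end AffineMap

theorem AffineIndependent.exists_affineEquiv {k V : Type*} [Field k] [AddCommGroup V]
    [Module k V] [FiniteDimensional k V] {p q s : V} (h : AffineIndependent k ![p, q, s])
    (hV : Module.finrank k V = 2) :
    ∃ φ : (k × k) ≃ᵃ[k] V, φ 0 = p ∧ φ (1, 0) = q ∧ φ (0, 1) = s := by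
  have hli : LinearIndependent k ![q - p, s - p] := by
    have := (affineIndependent_iff_linearIndependent_vsub k _ 0).1 h
    rw [← linearIndependent_equiv (finSuccAboveEquiv 0)] at this
    have e : ![q - p, s - p] = (fun i : {x : Fin 3 // x ≠ 0} => ![p, q, s] i -ᵥ ![p, q, s] 0) ∘
        finSuccAboveEquiv (0 : Fin 3) := by
      ext i; fin_cases i <;> rfl
    rwa [e]
  let L : k × k →ₗ[k] V :=
    (LinearMap.toSpanSingleton k V (q - p)).coprod (LinearMap.toSpanSingleton k V (s - p))
  have hL : Function.Injective L := by
    rw [← LinearMap.ker_eq_bot, LinearMap.ker_eq_bot']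
    rintro ⟨a, b⟩ hab
    obtain ⟨rfl, rfl⟩ := LinearIndependent.pair_iff.1 hli a b hab
    rfl
  refine ⟨(L.linearEquivOfInjective hL (by simp [hV])).toAffineEquiv.trans
    (AffineEquiv.constVAdd k V p), ?_, ?_, ?_⟩ <;> simp [L]

theorem mapsTo_range_c2 {φ : ℝ × ℝ →ᵃ[ℝ] ℝ × ℝ} (h0 : φ 0 ∈ range c2)
    (h1 : φ (1, 0) ∈ range c2) (h2 : φ (0, 1) ∈ range c2) : MapsTo φ (range c2) (range c2) := by
  obtain ⟨a, ha⟩ := h0; obtain ⟨b, hb⟩ := h1; obtain ⟨c, hc⟩ := h2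
  rintro _ ⟨z, rfl⟩
  refine ⟨a + z.1 • (b - a) + z.2 • (c - a), ?_⟩
  rw [show c2 z = ((z.1 : ℝ), (z.2 : ℝ)) from rfl, φ.map_prod_mk, ← ha, ← hb, ← hc]
  ext <;> simp [c2]

def IsLatticeCongr (A B : Set (ℝ × ℝ)) : Prop :=
  (∃ s : ℤ × ℤ, A = (fun x => x + c2 s) '' B) ∨ (∃ c : ℤ × ℤ, A = (fun x => c2 c - x) '' B)

theorem IsLatticeCongr.image {A B : Set (ℝ × ℝ)} (h : IsLatticeCongr A B)
    {φ : ℝ × ℝ →ᵃ[ℝ] ℝ × ℝ} (hφ : MapsTo φ (range c2) (range c2)) :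
    IsLatticeCongr (φ '' A) (φ '' B) := by
  obtain ⟨o, ho⟩ := hφ (mem_range_self 0)
  rcases h with ⟨s, rfl⟩ | ⟨c, rfl⟩
  · obtain ⟨t, ht⟩ := hφ (mem_range_self s)
    refine .inl ⟨t - o, ?_⟩
    simp only [image_image, φ.map_add_eq, ht, c2_sub, ho, show c2 0 = 0 from by simp [c2]]
  · obtain ⟨t, ht⟩ := hφ (mem_range_self c)
    refine .inr ⟨t + o, ?_⟩
    simp only [image_image, φ.map_sub_eq, ht, c2_add, ho, show c2 0 = 0 from by simp [c2]]

def IsDissection {ι E : Type*} [TopologicalSpace E] (f : ι → Set E) (X : Set E) : Prop :=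
  (Pairwise fun k l => Disjoint (interior (f k)) (interior (f l))) ∧ ⋃ k, f k = X

namespace IsDissection

variable {ι κ E F : Type*} [TopologicalSpace E] [TopologicalSpace F] {f : ι → Set E} {X : Set E}

theorem image (h : IsDissection f X) (φ : E ≃ₜ F) : IsDissection (fun k => φ '' f k) (φ '' X) :=
  ⟨fun k l hkl => by
    simpa only [← φ.image_interior, disjoint_image_iff φ.injective] using h.1 hkl,
   by rw [← image_iUnion, h.2]⟩

theorem comp_equiv (h : IsDissection f X) (e : κ ≃ ι) : IsDissection (f ∘ e) X :=
  ⟨fun _ _ hkl => h.1 (e.injective.ne hkl), (e.iSup_comp (g := f)).trans h.2⟩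

end IsDissection

def stdTriangle (r : ℝ) : Set (ℝ × ℝ) := {x | 0 ≤ x.1 ∧ 0 ≤ x.2 ∧ x.1 + x.2 ≤ r}

def lowerTri (i j : ℕ) : Set (ℝ × ℝ) :=
  {x | (i : ℝ) ≤ x.1 ∧ (j : ℝ) ≤ x.2 ∧ x.1 + x.2 ≤ i + j + 1}

def upperTri (i j : ℕ) : Set (ℝ × ℝ) :=
  {x | x.1 ≤ (i : ℝ) + 1 ∧ x.2 ≤ (j : ℝ) + 1 ∧ (i : ℝ) + j + 1 ≤ x.1 + x.2}

theorem stdTriangle_eq_smul {r : ℝ} (hr : 0 < r) : stdTriangle r = r • stdTriangle 1 := by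
  ext x
  simp only [mem_smul_set_iff_inv_smul_mem₀ hr.ne', stdTriangle, mem_ofPred_eq, Prod.smul_fst,
    Prod.smul_snd, smul_eq_mul, ← mul_add, inv_mul_le_one₀ hr,
    mul_nonneg_iff_of_pos_left (inv_pos.2 hr)]

theorem stdTriangle_one_eq_convexHull :
    stdTriangle 1 = convexHull ℝ {0, (1, 0), (0, 1)} := by
  refine Subset.antisymm (fun x ⟨h1, h2, h3⟩ => ?_) <| convexHull_min ?_ ?_
  · have := (convex_convexHull ℝ {(0 : ℝ × ℝ), (1, 0), (0, 1)}).sum_mem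
      (t := Finset.univ) (w := ![1 - x.1 - x.2, x.1, x.2]) (z := ![0, (1, 0), (0, 1)])
      (by intro i _; fin_cases i <;> simp <;> linarith) (by simp [Fin.sum_univ_three]; ring)
      (by intro i _; fin_cases i <;> apply subset_convexHull <;> simp)
    simpa [Fin.sum_univ_three] using this
  · rintro _ (rfl | rfl | rfl) <;> simp [stdTriangle]
  · rintro x ⟨hx1, hx2, hx3⟩ y ⟨hy1, hy2, hy3⟩ a b ha hb hab
    refine ⟨?_, ?_, ?_⟩ <;>
      simp only [Prod.fst_add, Prod.snd_add, Prod.smul_fst, Prod.smul_snd, smul_eq_mul] <;>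
      nlinarith

theorem lowerTri_eq_image (i j : ℕ) :
    lowerTri i j = (fun x => x + c2 (i, j)) '' stdTriangle 1 := by
  ext x
  simp only [image_add_right, mem_preimage, lowerTri, stdTriangle, c2, mem_ofPred_eq,
    Prod.fst_add, Prod.snd_add, Prod.fst_neg, Prod.snd_neg, Int.cast_natCast]
  constructor <;> rintro ⟨h1, h2, h3⟩ <;> refine ⟨?_, ?_, ?_⟩ <;> linarith

theorem upperTri_eq_image (i j : ℕ) :
    upperTri i j = (fun x => c2 (i + 1, j + 1) - x) '' stdTriangle 1 := by
  ext x
  constructor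
  · rintro ⟨h1, h2, h3⟩
    refine ⟨c2 (i + 1, j + 1) - x, ?_, sub_sub_cancel _ _⟩
    simp only [stdTriangle, c2, mem_ofPred_eq, Prod.fst_sub, Prod.snd_sub, Int.cast_add,
      Int.cast_natCast, Int.cast_one]
    refine ⟨?_, ?_, ?_⟩ <;> linarith
  · rintro ⟨y, ⟨h1, h2, h3⟩, rfl⟩
    simp only [upperTri, c2, mem_ofPred_eq, Prod.fst_sub, Prod.snd_sub, Int.cast_add,
      Int.cast_natCast, Int.cast_one]
    refine ⟨?_, ?_, ?_⟩ <;> linarith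

theorem lowerTri_subset_stdTriangle {i j m : ℕ} (h : i + j < m) :
    lowerTri i j ⊆ stdTriangle m := by
  rintro x ⟨h1, h2, h3⟩
  have : (i : ℝ) + j + 1 ≤ m := by exact_mod_cast h
  exact ⟨(Nat.cast_nonneg i).trans h1, (Nat.cast_nonneg j).trans h2, by linarith⟩

theorem upperTri_subset_stdTriangle {i j m : ℕ} (h : i + j + 1 < m) :
    upperTri i j ⊆ stdTriangle m := by
  rintro x ⟨h1, h2, h3⟩
  have : (i : ℝ) + j + 2 ≤ m := by exact_mod_cast h
  have hi : (0 : ℝ) ≤ i := i.cast_nonneg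
  have hj : (0 : ℝ) ≤ j := j.cast_nonneg
  exact ⟨by linarith, by linarith, by linarith⟩

section Coordinates

local notation "fst" => ContinuousLinearMap.fst ℝ ℝ ℝ
local notation "snd" => ContinuousLinearMap.snd ℝ ℝ ℝ

theorem surjective_fst_add_snd : Function.Surjective (fst + snd) := fun t => ⟨(t, 0), by simp⟩

theorem interior_lowerTri (i j : ℕ) : interior (lowerTri i j) =
    {x : ℝ × ℝ | (i : ℝ) < x.1 ∧ (j : ℝ) < x.2 ∧ x.1 + x.2 < i + j + 1} := by
  have : lowerTri i j = fst ⁻¹' Ici (i : ℝ) ∩ snd ⁻¹' Ici (j : ℝ) ∩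
      (fst + snd) ⁻¹' Iic ((i : ℝ) + j + 1) := by
    ext; simp [lowerTri, and_assoc]
  rw [this, interior_inter, interior_inter,
    ContinuousLinearMap.interior_preimage fst Prod.fst_surjective,
    ContinuousLinearMap.interior_preimage snd Prod.snd_surjective,
    ContinuousLinearMap.interior_preimage (fst + snd) surjective_fst_add_snd,
    interior_Ici, interior_Ici, interior_Iic]
  ext; simp [and_assoc]

theorem interior_upperTri (i j : ℕ) : interior (upperTri i j) =
    {x : ℝ × ℝ | x.1 < (i : ℝ) + 1 ∧ x.2 < (j : ℝ) + 1 ∧ (i : ℝ) + j + 1 < x.1 + x.2} := by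
  have : upperTri i j = fst ⁻¹' Iic ((i : ℝ) + 1) ∩ snd ⁻¹' Iic ((j : ℝ) + 1) ∩
      (fst + snd) ⁻¹' Ici ((i : ℝ) + j + 1) := by
    ext; simp [upperTri, and_assoc]
  rw [this, interior_inter, interior_inter,
    ContinuousLinearMap.interior_preimage fst Prod.fst_surjective,
    ContinuousLinearMap.interior_preimage snd Prod.snd_surjective,
    ContinuousLinearMap.interior_preimage (fst + snd) surjective_fst_add_snd,
    interior_Iic, interior_Iic, interior_Ici]
  ext; simp [and_assoc]

end Coordinates

noncomputable def cell (x : ℝ × ℝ) : ℕ × ℕ × ℕ := (⌊x.1⌋₊, ⌊x.2⌋₊, ⌊x.1 + x.2⌋₊)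

theorem cell_of_mem_interior_lowerTri {i j : ℕ} {x : ℝ × ℝ}
    (hx : x ∈ interior (lowerTri i j)) : cell x = (i, j, i + j) := by
  rw [interior_lowerTri] at hx
  obtain ⟨h1, h2, h3⟩ := hx
  have hi : (0 : ℝ) ≤ i := i.cast_nonneg
  have hj : (0 : ℝ) ≤ j := j.cast_nonneg
  simp only [cell, Prod.mk.injEq, Nat.floor_eq_iff (by linarith : 0 ≤ x.1),
    Nat.floor_eq_iff (by linarith : 0 ≤ x.2), Nat.floor_eq_iff (by linarith : 0 ≤ x.1 + x.2),
    Nat.cast_add]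
  refine ⟨⟨?_, ?_⟩, ⟨?_, ?_⟩, ?_, ?_⟩ <;> linarith

theorem cell_of_mem_interior_upperTri {i j : ℕ} {x : ℝ × ℝ}
    (hx : x ∈ interior (upperTri i j)) : cell x = (i, j, i + j + 1) := by
  rw [interior_upperTri] at hx
  obtain ⟨h1, h2, h3⟩ := hx
  have hi : (0 : ℝ) ≤ i := i.cast_nonneg
  have hj : (0 : ℝ) ≤ j := j.cast_nonneg
  simp only [cell, Prod.mk.injEq, Nat.floor_eq_iff (by linarith : 0 ≤ x.1),
    Nat.floor_eq_iff (by linarith : 0 ≤ x.2), Nat.floor_eq_iff (by linarith : 0 ≤ x.1 + x.2),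
    Nat.cast_add, Nat.cast_one]
  refine ⟨⟨?_, ?_⟩, ⟨?_, ?_⟩, ?_, ?_⟩ <;> linarith

/-- The pairs with `i + j < m` index the lower triangles; the other pairs, reflected by
`Fin.rev`, are exactly the indices `(a, b)` with `a + b + 1 < m` of the upper ones. -/
def tile (m : ℕ) (p : Fin m × Fin m) : Set (ℝ × ℝ) :=
  if (p.1 : ℕ) + p.2 < m then lowerTri p.1 p.2 else upperTri p.1.rev p.2.rev

def tileCell (m : ℕ) (p : Fin m × Fin m) : ℕ × ℕ × ℕ :=
  if (p.1 : ℕ) + p.2 < m then (p.1, p.2, p.1 + p.2)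
  else (p.1.rev, p.2.rev, p.1.rev + p.2.rev + 1)

theorem tileCell_injective (m : ℕ) : Function.Injective (tileCell m) := by
  rintro ⟨i, j⟩ ⟨k, l⟩ h
  simp only [tileCell, Fin.val_rev] at h
  have := i.isLt; have := j.isLt; have := k.isLt; have := l.isLt
  split_ifs at h <;> simp only [Prod.mk.injEq] at h <;>
    simp only [Prod.mk.injEq, Fin.ext_iff] <;> omega

theorem cell_of_mem_interior_tile {m : ℕ} {p : Fin m × Fin m} {x : ℝ × ℝ}
    (hx : x ∈ interior (tile m p)) : cell x = tileCell m p := by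
  unfold tile at hx
  unfold tileCell
  split_ifs at hx ⊢
  · exact cell_of_mem_interior_lowerTri hx
  · exact cell_of_mem_interior_upperTri hx

theorem pairwise_disjoint_interior_tile (m : ℕ) :
    Pairwise fun p q => Disjoint (interior (tile m p)) (interior (tile m q)) :=
  fun _ _ hpq => disjoint_left.2 fun _ hp hq => hpq <| tileCell_injective m <|
    (cell_of_mem_interior_tile hp).symm.trans (cell_of_mem_interior_tile hq)

theorem tile_subset_stdTriangle {m : ℕ} (p : Fin m × Fin m) : tile m p ⊆ stdTriangle m := by
  unfold tile
  split_ifs with h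
  · exact lowerTri_subset_stdTriangle h
  · exact upperTri_subset_stdTriangle (by simp only [Fin.val_rev]; omega)

theorem exists_nat_mem_Icc {n : ℕ} (hn : 0 < n) {t : ℝ} (h0 : 0 ≤ t) (htn : t ≤ n) :
    ∃ k < n, (k : ℝ) ≤ t ∧ t ≤ k + 1 := by
  rcases htn.lt_or_eq with hlt | rfl
  · exact ⟨⌊t⌋₊, (Nat.floor_lt h0).2 hlt, Nat.floor_le h0, (Nat.lt_floor_add_one t).le⟩
  · exact ⟨n - 1, by omega, by simp [Nat.cast_pred hn], by simp [Nat.cast_pred hn]⟩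

theorem iUnion_tile {m : ℕ} (hm : 0 < m) : ⋃ p, tile m p = stdTriangle m := by
  refine Subset.antisymm (iUnion_subset tile_subset_stdTriangle) fun x ⟨h1, h2, h3⟩ => ?_
  obtain ⟨i, hi, hi1, hi2⟩ := exists_nat_mem_Icc hm h1 (by linarith)
  obtain ⟨j, hj, hj1, hj2⟩ := exists_nat_mem_Icc (n := m - i) (by omega) h2
    (by rw [Nat.cast_sub hi.le]; linarith)
  rcases le_or_gt (x.1 + x.2) (i + j + 1) with h | h
  · refine mem_iUnion.2 ⟨(⟨i, hi⟩, ⟨j, by omega⟩), ?_⟩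
    simp only [tile, show i + j < m by omega, if_true]
    exact ⟨hi1, hj1, h⟩
  · have : (i + j + 1 : ℝ) < m := h.trans_le h3
    have : i + j + 1 < m := by exact_mod_cast this
    refine mem_iUnion.2 ⟨(Fin.rev ⟨i, hi⟩, Fin.rev ⟨j, by omega⟩), ?_⟩
    simp only [tile, Fin.rev_rev, Fin.val_rev,
      show ¬(m - (i + 1) + (m - (j + 1)) < m) by omega, if_false]
    exact ⟨hi2, hj2, h.le⟩

theorem isDissection_tile {m : ℕ} (hm : 0 < m) : IsDissection (tile m) (stdTriangle m) :=
  ⟨pairwise_disjoint_interior_tile m, iUnion_tile hm⟩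

theorem isLatticeCongr_tile (m : ℕ) (p : Fin m × Fin m) :
    IsLatticeCongr (tile m p) (stdTriangle 1) := by
  unfold tile
  split_ifs
  · exact .inl ⟨_, lowerTri_eq_image _ _⟩
  · exact .inr ⟨_, upperTri_eq_image _ _⟩

/-- For any (nondegenerate) triangle `T ⊂ ℝ²` with vertices in `ℤ²` and any integer `m ≥ 1`,
the scaled triangle `mT` (scaling by `m` about the vertex `P`) can be partitioned, up to null
sets, into `m²` triangles, each obtained from `T` by a translation by an integer vector and
possibly a point reflection about a point of `ℤ²` (the composition of a reflection `x ↦ 2p − x`,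
`p ∈ ℤ²`, with an integer translation being precisely a map `x ↦ c − x` with `c ∈ ℤ²`). -/
theorem triangle_partition (P Q S : ℤ × ℤ)
    (hind : AffineIndependent ℝ ![c2 P, c2 Q, c2 S])
    (T : Set (ℝ × ℝ)) (hT : T = convexHull ℝ {c2 P, c2 Q, c2 S})
    (m : ℕ) (hm : 1 ≤ m) :
    ∃ f : Fin (m ^ 2) → Set (ℝ × ℝ),
      (∀ k, (∃ s : ℤ × ℤ, f k = (fun x => x + c2 s) '' T)
          ∨ (∃ c : ℤ × ℤ, f k = (fun x => c2 c - x) '' T))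
      ∧ (∀ k l, k ≠ l → interior (f k) ∩ interior (f l) = ∅)
      ∧ volume ((⋃ k, f k) ∆ ((fun x => c2 P + (m : ℝ) • (x - c2 P)) '' T)) = 0 := by
  obtain ⟨φ, hP, hQ, hS⟩ := hind.exists_affineEquiv (by simp)
  have hlat : MapsTo φ.toAffineMap (range c2) (range c2) :=
    mapsTo_range_c2 (hP ▸ mem_range_self P) (hQ ▸ mem_range_self Q) (hS ▸ mem_range_self S)
  have hT₁ : T = φ '' stdTriangle 1 := by
    rw [hT, stdTriangle_one_eq_convexHull, ← φ.coe_toAffineMap, AffineMap.image_convexHull]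
    simp [image_insert_eq, hP, hQ, hS]
  have hmT : (fun x => c2 P + (m : ℝ) • (x - c2 P)) '' T = φ '' stdTriangle m := by
    rw [hT₁, stdTriangle_eq_smul (r := m) (Nat.cast_pos.2 hm), ← image_smul, image_image,
      image_image]
    exact image_congr fun x _ => by rw [← hP]; exact (φ.toAffineMap.map_smul_eq _ x).symm
  let e : Fin (m ^ 2) ≃ Fin m × Fin m := (finCongr (sq m)).trans finProdFinEquiv.symm
  obtain ⟨hdisj, hunion⟩ : IsDissection (fun k => φ '' tile m (e k)) (φ '' stdTriangle m) :=
    ((isDissection_tile hm).image φ.toContinuousAffineEquiv.toHomeomorph).comp_equiv e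
  refine ⟨fun k => φ '' tile m (e k), fun k => hT₁ ▸ (isLatticeCongr_tile m (e k)).image hlat,
    fun k l hkl => (hdisj hkl).inter_eq, ?_⟩
  rw [hunion, hmT, symmDiff_self, bot_eq_empty, measure_empty]
end

section
/- The 1D ECC coupled energy E^ecc(y) := ∑_{b∈B, b⊄Ω_c} e_b(y) + ∑_{b∈B, b⊂Ω_c} c_b(y) is consistent: its first variation at the uniform deformation y(x)=Fx vanishes for all admissible test functions vanishing on the constrained atoms. -/
/-!
At the uniform deformation every bond is stretched by the same factor, so its continuum
variation `(1/r) ∫_b φ'(rF) r v'` equals its atomistic variation `φ'(rF) (v_{i+r} - v_i)` by the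
fundamental theorem of calculus (`v` is Lipschitz, hence absolutely continuous). The coupled
variation is therefore the fully atomistic one, `∑_r φ'(rF) ∑_i (v_{i+r} - v_i)`, and each inner
sum telescopes: shifting the index by `r` matches the heads of the bonds with their tails, and
the atoms missing on either side are constrained ones, where `v` vanishes.
-/

open Finset

section Bonds

variable {α M : Type*} [AddCommGroup α] [DecidableEq α]

def bonds (I L : Finset α) : Finset (α × α) :=
  {p ∈ I ×ˢ L | p.1 + p.2 ∈ I}

theorem sum_filter_add_mem_sub_eq_zero [AddCommGroup M] {I D : Finset α} {u : α → M} {r : α}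
    (hu : ∀ i ∈ D, u i = 0) (hr : ∀ i ∈ I \ D, i + r ∈ I ∧ i - r ∈ I) :
    ∑ i ∈ I with i + r ∈ I, (u (i + r) - u i) = 0 := by
  have hfree {i : α} (hi : i ∈ I) (hne : u i ≠ 0) : i + r ∈ I ∧ i - r ∈ I :=
    hr i (mem_sdiff.2 ⟨hi, fun hD => hne (hu i hD)⟩)
  have hshift : ∑ i ∈ I with i + r ∈ I, u (i + r) = ∑ j ∈ I with j - r ∈ I, u j :=
    sum_nbij' (· + r) (· - r) (by simp +contextual) (by simp +contextual) (by simp) (by simp)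
      (by simp)
  rw [sum_sub_distrib, sub_eq_zero, hshift,
    sum_filter_of_ne fun i hi hne => (hfree hi hne).2,
    sum_filter_of_ne fun i hi hne => (hfree hi hne).1]

theorem sum_bonds_mul_sub_eq_zero [Ring M] {I D L : Finset α} {u : α → M} (g : α → M)
    (hu : ∀ i ∈ D, u i = 0) (hL : ∀ i ∈ I \ D, ∀ r ∈ L, i + r ∈ I ∧ i - r ∈ I) :
    ∑ p ∈ bonds I L, g p.2 * (u (p.1 + p.2) - u p.1) = 0 := by
  rw [bonds, sum_filter, sum_product_right]
  refine sum_eq_zero fun r hr => ?_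
  simp only [← mul_ite_zero, ← mul_sum, ← sum_filter]
  rw [sum_filter_add_mem_sub_eq_zero hu fun i hi => hL i hi r hr, mul_zero]

end Bonds

theorem Finset.sum_filter_and_not_add_sum_filter_and {ι M : Type*} [AddCommMonoid M]
    (s : Finset ι) (P Q : ι → Prop) [DecidablePred P] [DecidablePred Q] (f : ι → M) :
    ∑ x ∈ s with P x ∧ ¬ Q x, f x + ∑ x ∈ s with P x ∧ Q x, f x = ∑ x ∈ s with P x, f x := by
  rw [← filter_filter, ← filter_filter, add_comm, sum_filter_add_sum_filter_not]

theorem AbsolutelyContinuousOnInterval.one_div_mul_integral_const_mul_deriv {v : ℝ → ℝ}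
    {a r : ℝ} (hv : AbsolutelyContinuousOnInterval v a (a + r)) (hr : r ≠ 0) (c : ℝ) :
    1 / r * ∫ x in a..a + r, c * (r * deriv v x) = c * (v (a + r) - v a) := by
  simp only [← mul_assoc, intervalIntegral.integral_const_mul, hv.integral_deriv_eq_sub]
  field_simp

open scoped Classical

theorem ecc_consistency_1d_general (I ID : Finset ℤ) (R : ℕ)
    (φ : ℝ → ℝ) (F : ℝ) (Ωc : Set ℝ)
    (K : NNReal) (v : ℝ → ℝ) (hv : LipschitzWith K v)
    (hv0 : ∀ i ∈ ID, v (i : ℝ) = 0)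
    (hnb : ∀ i ∈ I \ ID, ∀ r : ℤ, |r| ≤ (R : ℤ) → i + r ∈ I) :
    (∑ p ∈ (I ×ˢ Finset.Icc (1 : ℤ) (R : ℤ)).filter
        (fun p => p.1 + p.2 ∈ I ∧ ¬ Set.Ioo ((p.1 : ℝ)) ((p.1 : ℝ) + (p.2 : ℝ)) ⊆ Ωc),
        deriv φ ((p.2 : ℝ) * F) * (v ((p.1 : ℝ) + (p.2 : ℝ)) - v (p.1 : ℝ)))
    + (∑ p ∈ (I ×ˢ Finset.Icc (1 : ℤ) (R : ℤ)).filter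
        (fun p => p.1 + p.2 ∈ I ∧ Set.Ioo ((p.1 : ℝ)) ((p.1 : ℝ) + (p.2 : ℝ)) ⊆ Ωc),
        (1 / (p.2 : ℝ)) *
          ∫ x in ((p.1 : ℝ))..((p.1 : ℝ) + (p.2 : ℝ)),
            deriv φ ((p.2 : ℝ) * F) * ((p.2 : ℝ) * deriv v x)) = 0 := by
  have hlength : ∀ r ∈ Icc (1 : ℤ) R, (r : ℝ) ≠ 0 := fun r hr => by
    have := (mem_Icc.1 hr).1
    positivity
  have hneighbors : ∀ i ∈ I \ ID, ∀ r ∈ Icc (1 : ℤ) R, i + r ∈ I ∧ i - r ∈ I := by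
    intro i hi r hr
    have habs : |r| ≤ R := abs_le.2 ⟨by linarith [(mem_Icc.1 hr).1], (mem_Icc.1 hr).2⟩
    exact ⟨hnb i hi r habs, sub_eq_add_neg i r ▸ hnb i hi (-r) (abs_neg r ▸ habs)⟩
  rw [sum_congr rfl fun p hp =>
      hv.lipschitzOnWith.absolutelyContinuousOnInterval.one_div_mul_integral_const_mul_deriv
        (hlength p.2 (mem_product.1 (mem_filter.1 hp).1).2) (deriv φ (p.2 * F)),
    sum_filter_and_not_add_sum_filter_and]
  simpa [bonds] using sum_bonds_mul_sub_eq_zero (u := fun i : ℤ => v i)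
    (fun r : ℤ => deriv φ (r * F)) hv0 hneighbors

/-- Consistency of the 1D ECC method: the first variation of
`E^ecc(y) = ∑_{b∈B, b⊄Ω_c} e_b(y) + ∑_{b∈B, b⊂Ω_c} c_b(y)` at the uniform deformation
`y(x) = F x` vanishes for every Lipschitz test function `v` vanishing on the constrained
atoms.  Here bonds are pairs `(i, i+r)`, `1 ≤ r ≤ R`, with both endpoints in `I`;
`e_b'(Fx; v) = φ'(rF)(v_{i+r} − v_i)` and `c_b'(Fx; v) = (1/r)∫_b φ'(rF) r v'(x) dx`. -/
theorem ecc_consistency_1d (I ID : Finset ℤ) (hID : ID ⊆ I) (R : ℕ)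
    (φ : ℝ → ℝ) (hφ : ContDiff ℝ 1 φ) (F : ℝ) (Ωc : Set ℝ)
    (K : NNReal) (v : ℝ → ℝ) (hv : LipschitzWith K v)
    (hv0 : ∀ i ∈ ID, v (i : ℝ) = 0)
    (hnb : ∀ i ∈ I \ ID, ∀ r : ℤ, |r| ≤ (R : ℤ) → i + r ∈ I) :
    (∑ p ∈ (I ×ˢ Finset.Icc (1 : ℤ) (R : ℤ)).filter
        (fun p => p.1 + p.2 ∈ I ∧ ¬ Set.Ioo ((p.1 : ℝ)) ((p.1 : ℝ) + (p.2 : ℝ)) ⊆ Ωc),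
        deriv φ ((p.2 : ℝ) * F) * (v ((p.1 : ℝ) + (p.2 : ℝ)) - v (p.1 : ℝ)))
    + (∑ p ∈ (I ×ˢ Finset.Icc (1 : ℤ) (R : ℤ)).filter
        (fun p => p.1 + p.2 ∈ I ∧ Set.Ioo ((p.1 : ℝ)) ((p.1 : ℝ) + (p.2 : ℝ)) ⊆ Ωc),
        (1 / (p.2 : ℝ)) *
          ∫ x in ((p.1 : ℝ))..((p.1 : ℝ) + (p.2 : ℝ)),
            deriv φ ((p.2 : ℝ) * F) * ((p.2 : ℝ) * deriv v x)) = 0 :=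
  ecc_consistency_1d_general I ID R φ F Ωc K v hv hv0 hnb
end

section
/- In 1D, the ECC energy admits the efficient representation E^ecc(y) = ∑_{b∈B, b⊄Ω_c} (e_b(y) − c_b(y)) + E_c(y), where c_b(y) := (1/r)∫_{Ω_c∩b} φ(r y') dx for all bonds b and E_c(y) = ∑_{r=1}^R ∫_{Ω_c} φ(r y') dx, provided every bond of length ≤ R intersecting Ω_c belongs to B. -/
open MeasureTheory
open scoped Classical

/-!
On `Ω_c` the bonds of length `r` cover almost every point exactly `r` times (every non-integer
`x` lies in `(i, i + r)` precisely for `⌊x⌋ - r < i ≤ ⌊x⌋`), so the shares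
`c_b = (1/r) ∫_{Ω_c ∩ b} φ(r y')` of all bonds add up to the continuum energy `E_c`; the bonds
not meeting `Ω_c` contribute nothing. Splitting `∑_b c_b` into the bonds inside `Ω_c` and the
others gives the efficient representation. Lipschitz continuity of `y` bounds `y'`, which makes
every `φ(r y')` integrable on the bounded interval `Ω_c`.
-/

open Set

theorem integrableOn_comp_const_mul_deriv {φ : ℝ → ℝ} (hφ : Continuous φ) {K : NNReal}
    {y : ℝ → ℝ} (hy : LipschitzWith K y) {s : Set ℝ} (hs : volume s ≠ ⊤) (c : ℝ) :
    IntegrableOn (fun x => φ (c * deriv y x)) s := by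
  obtain ⟨M, hM⟩ :=
    (isCompact_closedBall (0 : ℝ) (‖c‖ * K)).exists_bound_of_continuousOn hφ.continuousOn
  refine Measure.integrableOn_of_bounded hs
    (hφ.measurable.comp ((measurable_deriv y).const_mul c)).aestronglyMeasurable
    (ae_of_all _ fun x => hM _ ?_)
  rw [mem_closedBall_zero_iff, norm_mul]
  exact mul_le_mul_of_nonneg_left (norm_deriv_le_of_lipschitz hy) (norm_nonneg c)

theorem mem_Ioo_intCast_add_iff {x : ℝ} (hx : x ∉ range ((↑) : ℤ → ℝ)) (i r : ℤ) :
    x ∈ Ioo (i : ℝ) (i + r) ↔ i ∈ Finset.Ioc (⌊x⌋ - r) ⌊x⌋ := by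
  have hlt : (i : ℝ) < x ↔ i ≤ ⌊x⌋ := by
    rw [Int.le_floor, le_iff_lt_or_eq, or_iff_left fun h => hx ⟨i, h⟩]
  have hgt : x < i + r ↔ ⌊x⌋ - r < i := by
    rw [sub_lt_iff_lt_add, Int.floor_lt, Int.cast_add]
  rw [mem_Ioo, Finset.mem_Ioc, hlt, hgt, and_comm]

theorem sum_indicator_Ioo_intCast_add {I : Finset ℤ} {r : ℤ} (hr : 0 ≤ r) {x : ℝ}
    (hx : x ∉ range ((↑) : ℤ → ℝ)) (hI : ∀ i : ℤ, x ∈ Ioo (i : ℝ) (i + r) → i ∈ I)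
    (f : ℝ → ℝ) :
    ∑ i ∈ I, (Ioo (i : ℝ) (i + r)).indicator f x = r * f x := by
  have hcover : I.filter (fun i : ℤ => x ∈ Ioo (i : ℝ) (i + r)) = Finset.Ioc (⌊x⌋ - r) ⌊x⌋ := by
    ext i
    rw [Finset.mem_filter, mem_Ioo_intCast_add_iff hx]
    exact ⟨And.right, fun hi => ⟨hI i ((mem_Ioo_intCast_add_iff hx i r).2 hi), hi⟩⟩
  simp only [indicator_apply]
  rw [← Finset.sum_filter, hcover, Finset.sum_const, nsmul_eq_mul, Int.card_Ioc,
    sub_sub_cancel, ← Int.cast_natCast, Int.toNat_of_nonneg hr]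

theorem sum_setIntegral_inter_Ioo_intCast_add {I : Finset ℤ} {r : ℤ} (hr : 0 ≤ r) {s : Set ℝ}
    (hs : MeasurableSet s) {f : ℝ → ℝ} (hf : IntegrableOn f s)
    (hI : ∀ i : ℤ, (Ioo (i : ℝ) (i + r) ∩ s).Nonempty → i ∈ I) :
    ∑ i ∈ I, ∫ x in s ∩ Ioo (i : ℝ) (i + r), f x = r * ∫ x in s, f x := by
  have hnonint : ∀ᵐ x : ℝ, x ∉ range ((↑) : ℤ → ℝ) :=
    measure_eq_zero_iff_ae_notMem.1 ((countable_range _).measure_zero volume)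
  calc ∑ i ∈ I, ∫ x in s ∩ Ioo (i : ℝ) (i + r), f x
      = ∑ i ∈ I, ∫ x in s, (Ioo (i : ℝ) (i + r)).indicator f x := by
        simp only [setIntegral_indicator measurableSet_Ioo]
    _ = ∫ x in s, ∑ i ∈ I, (Ioo (i : ℝ) (i + r)).indicator f x :=
        (integral_finsetSum _ fun i _ => hf.indicator measurableSet_Ioo).symm
    _ = ∫ x in s, r * f x := by
        refine setIntegral_congr_ae hs ?_
        filter_upwards [hnonint] with x hx hxs
        exact sum_indicator_Ioo_intCast_add hr hx (fun i hi => hI i ⟨x, hi, hxs⟩) f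
    _ = r * ∫ x in s, f x := integral_const_mul _ _

theorem sum_bond_shares_eq_sum_setIntegral {I : Finset ℤ} {R : ℤ} {s : Set ℝ}
    (hs : MeasurableSet s) {g : ℤ → ℝ → ℝ} (hg : ∀ r, IntegrableOn (g r) s)
    (hB : ∀ i r : ℤ, 1 ≤ r → r ≤ R → (Ioo (i : ℝ) (i + r) ∩ s).Nonempty → i ∈ I ∧ i + r ∈ I) :
    ∑ p ∈ (I ×ˢ Finset.Icc 1 R).filter (fun p => p.1 + p.2 ∈ I),
        (1 / (p.2 : ℝ)) * ∫ x in s ∩ Ioo (p.1 : ℝ) (p.1 + p.2), g p.2 x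
      = ∑ r ∈ Finset.Icc 1 R, ∫ x in s, g r x := by
  rw [Finset.sum_subset (Finset.filter_subset _ _), Finset.sum_product_right]
  · refine Finset.sum_congr rfl fun r hr => ?_
    obtain ⟨hr1, hrR⟩ := Finset.mem_Icc.1 hr
    dsimp only
    rw [← Finset.mul_sum, sum_setIntegral_inter_Ioo_intCast_add (by omega) hs (hg r)
      fun i hi => (hB i r hr1 hrR hi).1, one_div, inv_mul_cancel_left₀ (by exact_mod_cast (by omega : r ≠ 0))]
  · intro p hp hpB
    obtain ⟨hq1, hq2⟩ := Finset.mem_Icc.1 (Finset.mem_product.1 hp).2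
    have hdisj : s ∩ Ioo (p.1 : ℝ) (p.1 + p.2) = ∅ := by
      rw [inter_comm, ← not_nonempty_iff_eq_empty]
      exact fun hne => hpB (Finset.mem_filter.2 ⟨hp, (hB p.1 p.2 hq1 hq2 hne).2⟩)
    rw [hdisj, Measure.restrict_empty, integral_zero_measure, mul_zero]

/-- Efficient representation of the 1D ECC energy:
`E^ecc(y) = ∑_{b∈B, b⊄Ω_c} (e_b(y) − c_b(y)) + E_c(y)`, where
`c_b(y) = (1/r)∫_{Ω_c∩b} φ(r y') dx` for all bonds `b` and
`E_c(y) = ∑_{r=1}^R ∫_{Ω_c} φ(r y') dx`, provided every bond of length `≤ R` intersecting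
the continuum interval `Ω_c` belongs to the bond set `B`. -/
theorem ecc_efficient_1d (I : Finset ℤ) (R : ℕ)
    (φ : ℝ → ℝ) (hφ : Continuous φ)
    (K : NNReal) (y : ℝ → ℝ) (hy : LipschitzWith K y)
    (a b : ℝ) (Ωc : Set ℝ) (hΩc : Ωc = Set.Ioo a b)
    (hB : ∀ i r : ℤ, 1 ≤ r → r ≤ (R : ℤ) →
      (Set.Ioo (i : ℝ) ((i : ℝ) + (r : ℝ)) ∩ Ωc).Nonempty → i ∈ I ∧ i + r ∈ I) :
    (∑ p ∈ ((I ×ˢ Finset.Icc (1 : ℤ) (R : ℤ)).filter (fun p => p.1 + p.2 ∈ I)).filter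
        (fun p => ¬ Set.Ioo ((p.1 : ℝ)) ((p.1 : ℝ) + (p.2 : ℝ)) ⊆ Ωc),
        φ (y ((p.1 : ℝ) + (p.2 : ℝ)) - y (p.1 : ℝ)))
    + (∑ p ∈ ((I ×ˢ Finset.Icc (1 : ℤ) (R : ℤ)).filter (fun p => p.1 + p.2 ∈ I)).filter
        (fun p => Set.Ioo ((p.1 : ℝ)) ((p.1 : ℝ) + (p.2 : ℝ)) ⊆ Ωc),
        (1 / (p.2 : ℝ)) *
          ∫ x in Ωc ∩ Set.Ioo ((p.1 : ℝ)) ((p.1 : ℝ) + (p.2 : ℝ)), φ ((p.2 : ℝ) * deriv y x))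
    = (∑ p ∈ ((I ×ˢ Finset.Icc (1 : ℤ) (R : ℤ)).filter (fun p => p.1 + p.2 ∈ I)).filter
        (fun p => ¬ Set.Ioo ((p.1 : ℝ)) ((p.1 : ℝ) + (p.2 : ℝ)) ⊆ Ωc),
        (φ (y ((p.1 : ℝ) + (p.2 : ℝ)) - y (p.1 : ℝ))
          - (1 / (p.2 : ℝ)) *
            ∫ x in Ωc ∩ Set.Ioo ((p.1 : ℝ)) ((p.1 : ℝ) + (p.2 : ℝ)), φ ((p.2 : ℝ) * deriv y x)))
    + ∑ r ∈ Finset.Icc (1 : ℤ) (R : ℤ), ∫ x in Ωc, φ ((r : ℝ) * deriv y x) := by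
  have hΩm : MeasurableSet Ωc := hΩc ▸ measurableSet_Ioo
  have hΩfin : volume Ωc ≠ ⊤ := hΩc ▸ measure_Ioo_lt_top.ne
  have hshares := sum_bond_shares_eq_sum_setIntegral hΩm
    (g := fun r x => φ (r * deriv y x))
    (fun r => integrableOn_comp_const_mul_deriv hφ hy hΩfin r) hB
  rw [← Finset.sum_filter_add_sum_filter_not _
    (fun p => Set.Ioo ((p.1 : ℝ)) ((p.1 : ℝ) + (p.2 : ℝ)) ⊆ Ωc)] at hshares
  rw [Finset.sum_sub_distrib]
  linarith
end

section
/- In the 2D setting, for any deformation gradient F ∈ ℝ^{2×2}, any bond b = (i, i+r) contained in the continuum region, and any v ∈ P₁(T) (continuous piecewise affine on the triangulation), the variation of the continuum bond contribution c_b(y) := ⨍_b φ(D_r y) db at y = Fx equals ∇φ(Fr) · (v_{i+r} − v_i), which equals the variation of the exact contribution e_b(y) := φ(y_{i+r} − y_i). -/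
open MeasureTheory

/-- One-sided directional derivative `D_r f (x) = lim_{ε→0⁺} (f(x+εr) − f(x))/ε`. -/
noncomputable def Dr (r : ℝ × ℝ) (f : ℝ × ℝ → ℝ × ℝ) (x : ℝ × ℝ) : ℝ × ℝ :=
  derivWithin (fun s : ℝ => f (x + s • r)) (Set.Ioi (0 : ℝ)) 0

/-!
Along the bond, `D_r v` is the slope `A_k` of `v` on the `k`-th piece of the partition `t`, so
the continuum energy at `y = Fx + s v` is the finite sum `∑ₖ (t_{k+1} - t_k) φ(Fr + s A_k)`. Its
derivative at `s = 0` is `∇φ(Fr)` applied to `∑ₖ (t_{k+1} - t_k) A_k`, which telescopes to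
`v_{i+r} - v_i`. Since `F` is linear, the exact energy is `φ(Fr + s (v_{i+r} - v_i))`, with the
same derivative.
-/

open Set

theorem Fin.sum_univ_succ_sub_castSucc {E : Type*} [AddCommGroup E] :
    ∀ {M : ℕ} (f : Fin (M + 1) → E),
      ∑ k : Fin M, (f k.succ - f k.castSucc) = f (Fin.last M) - f 0
  | 0, f => by simp
  | M + 1, f => by
    have ih := Fin.sum_univ_succ_sub_castSucc (fun k => f k.castSucc)
    simp only [← Fin.succ_castSucc] at ih
    rw [Fin.sum_univ_castSucc, ih, Fin.succ_last, Fin.castSucc_zero]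
    abel

theorem intervalIntegral_eq_smul_of_eqOn_Ioo {E : Type*} [NormedAddCommGroup E] [NormedSpace ℝ E]
    [CompleteSpace E] {g : ℝ → E} {a b : ℝ} {c : E} (hab : a ≤ b)
    (hg : EqOn g (fun _ => c) (Ioo a b)) :
    IntervalIntegrable g volume a b ∧ ∫ l in a..b, g l = (b - a) • c := by
  constructor
  · rw [intervalIntegrable_iff_integrableOn_Ioo_of_le hab]
    exact (integrableOn_const (by simp)).congr_fun hg.symm measurableSet_Ioo
  · rw [intervalIntegral.integral_of_le hab, integral_Ioc_eq_integral_Ioo,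
      setIntegral_congr_fun measurableSet_Ioo hg, setIntegral_const]
    simp [hab]

theorem intervalIntegral_eq_sum_of_eqOn_Ioo {E : Type*} [NormedAddCommGroup E] [NormedSpace ℝ E]
    [CompleteSpace E] {g : ℝ → E} :
    ∀ {M : ℕ} {t : Fin (M + 1) → ℝ} (c : Fin M → E), Monotone t →
      (∀ k, EqOn g (fun _ => c k) (Ioo (t k.castSucc) (t k.succ))) →
      IntervalIntegrable g volume (t 0) (t (Fin.last M)) ∧
        ∫ l in t 0..t (Fin.last M), g l = ∑ k, (t k.succ - t k.castSucc) • c k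
  | 0, t, c, _, _ => by simp
  | M + 1, t, c, ht, hg => by
    obtain ⟨hint, heq⟩ := intervalIntegral_eq_sum_of_eqOn_Ioo (t := fun k => t k.castSucc)
      (fun k => c k.castSucc) (ht.comp Fin.strictMono_castSucc.monotone)
      (fun k => by simpa only [← Fin.succ_castSucc] using hg k.castSucc)
    obtain ⟨hint', heq'⟩ := intervalIntegral_eq_smul_of_eqOn_Ioo
      (ht (Fin.castSucc_le_succ (Fin.last M))) (hg (Fin.last M))
    simp only [Fin.castSucc_zero, Fin.succ_last] at hint heq hint' heq'
    refine ⟨hint.trans hint', ?_⟩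
    rw [← intervalIntegral.integral_add_adjacent_intervals hint hint', heq, heq',
      Fin.sum_univ_castSucc]
    simp only [Fin.succ_castSucc, Fin.succ_last]

theorem sum_smul_slope_eq_sub_of_affine {E : Type*} [AddCommGroup E] [Module ℝ E] {M : ℕ}
    {w : ℝ → E} {t : Fin (M + 1) → ℝ} (ht : Monotone t) (A C : Fin M → E)
    (hw : ∀ k, ∀ m ∈ Icc (t k.castSucc) (t k.succ), w m = m • A k + C k) :
    ∑ k, (t k.succ - t k.castSucc) • A k = w (t (Fin.last M)) - w (t 0) := by
  refine (Finset.sum_congr rfl fun k _ => ?_).trans (Fin.sum_univ_succ_sub_castSucc (w ∘ t))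
  have hk := ht (Fin.castSucc_le_succ k)
  simp only [Function.comp_apply, hw k _ ⟨le_rfl, hk⟩, hw k _ ⟨hk, le_rfl⟩, sub_smul]
  abel

theorem c2_add_s13 (i j : ℤ × ℤ) : c2 (i + j) = c2 i + c2 j := by
  simp [c2]

theorem Dr_add_smul_eq_of_affine {r x A C : ℝ × ℝ} {v : ℝ × ℝ → ℝ × ℝ} {a b l : ℝ}
    (hv : ∀ m ∈ Icc a b, v (x + m • r) = m • A + C) (hl : l ∈ Ico a b) :
    Dr r v (x + l • r) = A := by
  have haffine : HasDerivWithinAt (fun s : ℝ => (l + s) • A + C) A (Ioi 0) 0 := by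
    simpa using ((((hasDerivAt_id 0).const_add l).smul_const A).add_const C).hasDerivWithinAt
  refine (haffine.congr_of_eventuallyEq ?_ ?_).derivWithin (uniqueDiffWithinAt_Ioi 0)
  · filter_upwards [Ioo_mem_nhdsGT (sub_pos.2 hl.2)] with s hs
    rw [add_assoc, ← add_smul, hv]
    constructor <;> linarith [hl.1, hs.1, hs.2]
  · simpa using hv l (Ico_subset_Icc_self hl)

theorem variation_continuum_eq_exact_2d_general
    (φ : ℝ × ℝ → ℝ) (hφ : ContDiff ℝ 1 φ) (F : (ℝ × ℝ) →ₗ[ℝ] (ℝ × ℝ))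
    (i r : ℤ × ℤ)
    (v : ℝ × ℝ → ℝ × ℝ)
    (M : ℕ) (t : Fin (M + 1) → ℝ) (ht : StrictMono t)
    (ht0 : t 0 = 0) (ht1 : t (Fin.last M) = 1)
    (haff : ∀ k : Fin M, ∃ a c : ℝ × ℝ,
      ∀ l ∈ Set.Icc (t k.castSucc) (t k.succ), v (c2 i + l • c2 r) = l • a + c) :
    HasDerivAt
        (fun s : ℝ => ∫ l in (0:ℝ)..1, φ (F (c2 r) + s • Dr (c2 r) v (c2 i + l • c2 r)))
        (fderiv ℝ φ (F (c2 r)) (v (c2 (i + r)) - v (c2 i))) 0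
      ∧ HasDerivAt
        (fun s : ℝ => φ ((F (c2 (i + r)) + s • v (c2 (i + r))) - (F (c2 i) + s • v (c2 i))))
        (fderiv ℝ φ (F (c2 r)) (v (c2 (i + r)) - v (c2 i))) 0 := by
  choose A C hAC using haff
  have hφ' : HasFDerivAt φ (fderiv ℝ φ (F (c2 r))) (F (c2 r)) :=
    (hφ.differentiable one_ne_zero _).hasFDerivAt
  constructor
  · have hslopes : ∑ k, (t k.succ - t k.castSucc) • A k = v (c2 (i + r)) - v (c2 i) := by
      simpa [ht0, ht1, c2_add_s13] using sum_smul_slope_eq_sub_of_affine ht.monotone A C hAC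
    have hpieces (s : ℝ) : ∫ l in (0:ℝ)..1, φ (F (c2 r) + s • Dr (c2 r) v (c2 i + l • c2 r)) =
        ∑ k, (t k.succ - t k.castSucc) • φ (F (c2 r) + s • A k) := by
      rw [← ht0, ← ht1]
      refine (intervalIntegral_eq_sum_of_eqOn_Ioo _ ht.monotone fun k l hl => ?_).2
      simp only [Dr_add_smul_eq_of_affine (hAC k) (Ioo_subset_Ico_self hl)]
    simp only [hpieces, ← hslopes, map_sum, map_smul, smul_eq_mul]
    exact HasDerivAt.fun_sum fun k _ => HasDerivAt.const_mul _ (hφ'.hasLineDerivAt (A k))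
  · have hbond (s : ℝ) : F (c2 (i + r)) + s • v (c2 (i + r)) - (F (c2 i) + s • v (c2 i)) =
        F (c2 r) + s • (v (c2 (i + r)) - v (c2 i)) := by
      rw [c2_add_s13, map_add, smul_sub]
      abel
    simp only [hbond]
    exact hφ'.hasLineDerivAt _

/-- In 2D, for any deformation gradient `F`, any bond `b = (i, i+r)` contained in the
continuum region, and any continuous test function `v` which is piecewise affine along the
bond (as a member of `P₁(T)` would be), the variation of the continuum bond contribution
`c_b(y) = ⨍_b φ(D_r y) db` at the uniform deformation `y = Fx` equals
`∇φ(Fr)·(v_{i+r} − v_i)`, which in turn equals the variation of the exact contribution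
`e_b(y) = φ(y_{i+r} − y_i)`. -/
theorem variation_continuum_eq_exact_2d
    (φ : ℝ × ℝ → ℝ) (hφ : ContDiff ℝ 1 φ) (F : (ℝ × ℝ) →ₗ[ℝ] (ℝ × ℝ))
    (i r : ℤ × ℤ) (hr : r ≠ 0)
    (v : ℝ × ℝ → ℝ × ℝ) (hv : Continuous v)
    (M : ℕ) (t : Fin (M + 1) → ℝ) (ht : StrictMono t)
    (ht0 : t 0 = 0) (ht1 : t (Fin.last M) = 1)
    (haff : ∀ k : Fin M, ∃ a c : ℝ × ℝ,
      ∀ l ∈ Set.Icc (t k.castSucc) (t k.succ), v (c2 i + l • c2 r) = l • a + c) :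
    HasDerivAt
        (fun s : ℝ => ∫ l in (0:ℝ)..1, φ (F (c2 r) + s • Dr (c2 r) v (c2 i + l • c2 r)))
        (fderiv ℝ φ (F (c2 r)) (v (c2 (i + r)) - v (c2 i))) 0
      ∧ HasDerivAt
        (fun s : ℝ => φ ((F (c2 (i + r)) + s • v (c2 (i + r))) - (F (c2 i) + s • v (c2 i))))
        (fderiv ℝ φ (F (c2 r)) (v (c2 (i + r)) - v (c2 i))) 0 :=
  variation_continuum_eq_exact_2d_general φ hφ F i r v M t ht ht0 ht1 haff
end
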